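/- arXiv:2203.06206 — 2 statements merged into one kernel-verified Lean document; each statement's English description precedes it below -/
import Mathlib

section
/- Let X : (Σ, α(z)|dz|²) → (ℝ³, ⟨·,·⟩_F) be a conformal immersion. The sectional curvature of the ambient conformally flat manifold along the tangent plane dX(TΣ) is K̄(TΣ) = -‖∇F‖² + (4/(α F(X))) Hess F(X_z, X_{z̄}), where ∇F and Hess F are the Euclidean gradient and Hessian of F evaluated at X(z). -/
open scoped BigOperators
open Complex (I)

/-- Partial derivative in the `i`-th coordinate direction. -/
noncomputable def pd (i : Fin 3) (φ : (Fin 3 → ℝ) → ℝ) (x : Fin 3 → ℝ) : ℝ :=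
  fderiv ℝ φ x (Pi.single i 1)

/-- Components of the conformal metric `⟨·,·⟩_F = F⁻²(dx₁²+dx₂²+dx₃²)`. -/
noncomputable def gmet (F : (Fin 3 → ℝ) → ℝ) (x : Fin 3 → ℝ) (i j : Fin 3) : ℝ :=
  ((F x) ^ 2)⁻¹ * (if i = j then 1 else 0)

/-- Christoffel symbols of the conformal metric. -/
noncomputable def christoffel (F : (Fin 3 → ℝ) → ℝ) (k i j : Fin 3) (x : Fin 3 → ℝ) : ℝ :=
  (1 / 2) * ∑ l : Fin 3, ((F x) ^ 2 * (if k = l then 1 else 0)) *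
    (pd i (fun y => gmet F y j l) x + pd j (fun y => gmet F y i l) x
      - pd l (fun y => gmet F y i j) x)

/-- Components `R^m_{kij}` of the curvature tensor of the conformal metric. -/
noncomputable def riemComp (F : (Fin 3 → ℝ) → ℝ) (m k i j : Fin 3) (x : Fin 3 → ℝ) : ℝ :=
  pd i (fun y => christoffel F m j k y) x - pd j (fun y => christoffel F m i k y) x
    + ∑ l : Fin 3, (christoffel F m i l x * christoffel F l j k x
        - christoffel F m j l x * christoffel F l i k x)

/-- The quadrilinear curvature form `⟨R̄(A,B)C, D⟩_F` of the conformal metric at `x`. -/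
noncomputable def riemQuad (F : (Fin 3 → ℝ) → ℝ) (x : Fin 3 → ℝ)
    (A B C D : Fin 3 → ℝ) : ℝ :=
  ∑ i : Fin 3, ∑ j : Fin 3, ∑ k : Fin 3, ∑ m : Fin 3,
    A i * B j * C k * D m * ((F x) ^ 2)⁻¹ * riemComp F m k i j x

/-- Euclidean Hessian of `F` as a bilinear form at `x`. -/
noncomputable def hessR (F : (Fin 3 → ℝ) → ℝ) (x : Fin 3 → ℝ) (v w : Fin 3 → ℝ) : ℝ :=
  ∑ i : Fin 3, ∑ j : Fin 3, v i * w j * pd i (fun y => pd j F y) x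

/-- Euclidean dot product. -/
noncomputable def dot3 (v w : Fin 3 → ℝ) : ℝ := ∑ i : Fin 3, v i * w i

/-- Partial derivative of the immersion. -/
noncomputable def pD (X : ℂ → Fin 3 → ℝ) (d : ℂ) (z : ℂ) (k : Fin 3) : ℝ :=
  fderiv ℝ (fun w => X w k) z d


section AuxProof

variable {F : (Fin 3 → ℝ) → ℝ}

lemma pd_calc {φ : (Fin 3 → ℝ) → ℝ} {L : (Fin 3 → ℝ) →L[ℝ] ℝ} {x} (h : HasFDerivAt φ L x)
    (i : Fin 3) : pd i φ x = L (Pi.single i 1) := by rw [pd, h.fderiv]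

lemma hasF (hF : ContDiff ℝ (⊤ : ℕ∞) F) (x : Fin 3 → ℝ) : HasFDerivAt F (fderiv ℝ F x) x :=
  ((hF.differentiable (by simp)) x).hasFDerivAt

lemma contDiff_pd (hF : ContDiff ℝ (⊤ : ℕ∞) F) (j : Fin 3) : ContDiff ℝ (⊤ : ℕ∞) (fun y => pd j F y) := by
  simp only [pd]
  exact (hF.fderiv_right (m := (⊤ : ℕ∞)) (by simp)).clm_apply contDiff_const

lemma pd_symm (hF : ContDiff ℝ (⊤ : ℕ∞) F) (x : Fin 3 → ℝ) (p q : Fin 3) :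
    pd p (fun y => pd q F y) x = pd q (fun y => pd p F y) x := by
  have hd : ContDiff ℝ (⊤ : ℕ∞) (fderiv ℝ F) := hF.fderiv_right (m := (⊤ : ℕ∞)) (by simp)
  have h1 : ∀ r j : Fin 3, pd r (fun y => pd j F y) x
      = fderiv ℝ (fderiv ℝ F) x (Pi.single r 1) (Pi.single j 1) := by
    intro r j
    have hc : DifferentiableAt ℝ (fderiv ℝ F) x := (hd.differentiable (by simp)) x
    have := fderiv_clm_apply (𝕜 := ℝ) hc (differentiableAt_const (Pi.single j 1))
    simp only [pd]
    rw [show (fun y => fderiv ℝ F y (Pi.single j 1))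
        = fun y => (fderiv ℝ F y) ((fun _ => (Pi.single j 1 : Fin 3 → ℝ)) y) from rfl, this]
    simp
  rw [h1 p q, h1 q p]
  exact (hF.contDiffAt.isSymmSndFDerivAt (by rw [minSmoothness_of_isRCLikeNormedField]; exact WithTop.coe_le_coe.mpr (le_top : (2 : ℕ∞) ≤ ⊤))) _ _

lemma hasF_inv (hF : ContDiff ℝ (⊤ : ℕ∞) F) (hFpos : ∀ x, 0 < F x) (x : Fin 3 → ℝ) :
    HasFDerivAt (fun y => (F y)⁻¹) ((-((F x)^2)⁻¹) • fderiv ℝ F x) x := by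
  exact ((hasDerivAt_inv (hFpos x).ne').comp_hasFDerivAt x (hasF hF x)).congr_fderiv (by ext v; simp)

lemma pd_gmet (hF : ContDiff ℝ (⊤ : ℕ∞) F) (hFpos : ∀ x, 0 < F x) (i j l : Fin 3) (x : Fin 3 → ℝ) :
    pd i (fun y => gmet F y j l) x
      = (if j = l then 1 else 0) * (-2 * pd i F x / (F x)^3) := by
  have hf := (hFpos x).ne'
  have hinv := hasF_inv hF hFpos x
  have hsq : HasFDerivAt (fun y => ((F y)^2)⁻¹)
      (((F x)⁻¹ • ((-((F x)^2)⁻¹) • fderiv ℝ F x))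
        + ((F x)⁻¹ • ((-((F x)^2)⁻¹) • fderiv ℝ F x))) x := by
    have h := hinv.mul hinv
    have : (fun y => ((F y)^2)⁻¹) = fun y => (F y)⁻¹ * (F y)⁻¹ := by
      funext y; rw [pow_two, mul_inv]
    rw [this]; exact h
  have hres : HasFDerivAt (fun y => gmet F y j l)
      ((if j = l then (1:ℝ) else 0) • (((F x)⁻¹ • ((-((F x)^2)⁻¹) • fderiv ℝ F x))
        + ((F x)⁻¹ • ((-((F x)^2)⁻¹) • fderiv ℝ F x)))) x := by
    have : (fun y => gmet F y j l) = fun y => ((F y)^2)⁻¹ * (if j = l then (1:ℝ) else 0) := by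
      funext y; rw [gmet]
    rw [this]
    exact hsq.mul_const (if j = l then (1:ℝ) else 0)
  rw [pd_calc hres]
  simp only [ContinuousLinearMap.smul_apply, ContinuousLinearMap.add_apply, smul_eq_mul]
  have : fderiv ℝ F x (Pi.single i 1) = pd i F x := rfl
  rw [this]
  split_ifs <;> field_simp <;> ring

lemma christoffel_eq (hF : ContDiff ℝ (⊤ : ℕ∞) F) (hFpos : ∀ x, 0 < F x) (k i j : Fin 3)
    (x : Fin 3 → ℝ) :
    christoffel F k i j x
      = (pd k F x * (if i = j then 1 else 0) - pd i F x * (if j = k then 1 else 0)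
          - pd j F x * (if i = k then 1 else 0)) / F x := by
  have hf := (hFpos x).ne'
  simp only [christoffel, pd_gmet hF hFpos, mul_ite, ite_mul, mul_zero, zero_mul, mul_one,
    Finset.sum_ite_eq, Finset.mem_univ, if_true]
  split_ifs <;> field_simp <;> ring

lemma pd_christoffel (hF : ContDiff ℝ (⊤ : ℕ∞) F) (hFpos : ∀ x, 0 < F x) (a k i j : Fin 3)
    (x : Fin 3 → ℝ) :
    pd a (fun y => christoffel F k i j y) x
      = pd a F x * (pd i F x * (if j = k then 1 else 0) + pd j F x * (if i = k then 1 else 0)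
            - pd k F x * (if i = j then 1 else 0)) / (F x)^2
        + (pd a (fun y => pd k F y) x * (if i = j then 1 else 0)
            - pd a (fun y => pd i F y) x * (if j = k then 1 else 0)
            - pd a (fun y => pd j F y) x * (if i = k then 1 else 0)) / F x := by
  have hf := (hFpos x).ne'
  have hfun : (fun y => christoffel F k i j y)
      = fun y => (pd k F y * (if i = j then (1:ℝ) else 0) - pd i F y * (if j = k then 1 else 0)
          - pd j F y * (if i = k then 1 else 0)) * (F y)⁻¹ := by
    funext y; rw [christoffel_eq hF hFpos, div_eq_mul_inv]
  have Dk := ((contDiff_pd hF k).differentiable (by simp) x).hasFDerivAt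
  have Di := ((contDiff_pd hF i).differentiable (by simp) x).hasFDerivAt
  have Dj := ((contDiff_pd hF j).differentiable (by simp) x).hasFDerivAt
  have num := ((Dk.mul_const (if i = j then (1:ℝ) else 0)).sub
      (Di.mul_const (if j = k then (1:ℝ) else 0))).sub
      (Dj.mul_const (if i = k then (1:ℝ) else 0))
  have prod := num.mul (hasF_inv hF hFpos x)
  rw [hfun, pd_calc (show HasFDerivAt (fun y => (pd k F y * (if i = j then (1:ℝ) else 0) - pd i F y * (if j = k then 1 else 0)
          - pd j F y * (if i = k then 1 else 0)) * (F y)⁻¹) _ x from prod)]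
  simp only [ContinuousLinearMap.add_apply, ContinuousLinearMap.smul_apply,
    ContinuousLinearMap.sub_apply, smul_eq_mul, Pi.sub_apply]
  have ek : fderiv ℝ (fun y => pd k F y) x (Pi.single a 1) = pd a (fun y => pd k F y) x := rfl
  have ei : fderiv ℝ (fun y => pd i F y) x (Pi.single a 1) = pd a (fun y => pd i F y) x := rfl
  have ej : fderiv ℝ (fun y => pd j F y) x (Pi.single a 1) = pd a (fun y => pd j F y) x := rfl
  have ef : fderiv ℝ F x (Pi.single a 1) = pd a F x := rfl
  rw [ek, ei, ej, ef]
  split_ifs <;> field_simp <;> (try ring) <;> (try exact Or.inl trivial)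

set_option maxHeartbeats 4000000 in
theorem riemComp_eq (hF : ContDiff ℝ (⊤ : ℕ∞) F) (hFpos : ∀ x, 0 < F x) (x : Fin 3 → ℝ)
    (hs : ∀ p q : Fin 3, pd p (fun y => pd q F y) x = pd q (fun y => pd p F y) x) :
    ∀ m k i j : Fin 3, riemComp F m k i j x = ((F x)^2)⁻¹ * (
      (F x * pd i (fun y => pd m F y) x - (1/2) * (∑ r : Fin 3, pd r F x ^ 2)
          * (if i = m then 1 else 0)) * (if j = k then 1 else 0)
    + (F x * pd j (fun y => pd k F y) x - (1/2) * (∑ r : Fin 3, pd r F x ^ 2)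
          * (if j = k then 1 else 0)) * (if i = m then 1 else 0)
    - (F x * pd i (fun y => pd k F y) x - (1/2) * (∑ r : Fin 3, pd r F x ^ 2)
          * (if i = k then 1 else 0)) * (if j = m then 1 else 0)
    - (F x * pd j (fun y => pd m F y) x - (1/2) * (∑ r : Fin 3, pd r F x ^ 2)
          * (if j = m then 1 else 0)) * (if i = k then 1 else 0)) := by
  have hf := (hFpos x).ne'
  have htri : ∀ (v : Fin 3), v = 0 ∨ v = 1 ∨ v = 2 := by decide
  intro m k i j
  have h01 := hs 0 1; have h02 := hs 0 2; have h12 := hs 1 2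
  rcases htri m with rfl|rfl|rfl <;> rcases htri k with rfl|rfl|rfl <;>
    rcases htri i with rfl|rfl|rfl <;> rcases htri j with rfl|rfl|rfl <;>
  · simp only [riemComp, Fin.sum_univ_three]
    simp only [pd_christoffel hF hFpos]
    simp only [christoffel_eq hF hFpos]
    simp only [Fin.reduceEq, reduceIte, if_true, if_false, mul_zero, zero_mul, mul_one,
      one_mul, sub_zero, zero_add, add_zero, zero_sub, neg_zero, zero_div]
    try simp only [h01, h02, h12]
    try field_simp
    try ring
    try norm_num

set_option maxHeartbeats 4000000 in
theorem riemQuad_formula (hF : ContDiff ℝ (⊤ : ℕ∞) F) (hFpos : ∀ x, 0 < F x) (x : Fin 3 → ℝ)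
    (hs : ∀ p q : Fin 3, pd p (fun y => pd q F y) x = pd q (fun y => pd p F y) x)
    (A B C D : Fin 3 → ℝ) :
    riemQuad F x A B C D = ((F x)^2)⁻¹ * ((F x)^2)⁻¹ * (
      (F x * hessR F x A D - (1/2) * (∑ r : Fin 3, pd r F x ^ 2) * dot3 A D) * dot3 B C
    + (F x * hessR F x B C - (1/2) * (∑ r : Fin 3, pd r F x ^ 2) * dot3 B C) * dot3 A D
    - (F x * hessR F x A C - (1/2) * (∑ r : Fin 3, pd r F x ^ 2) * dot3 A C) * dot3 B D
    - (F x * hessR F x B D - (1/2) * (∑ r : Fin 3, pd r F x ^ 2) * dot3 B D) * dot3 A C) := by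
  simp only [riemQuad, riemComp_eq hF hFpos x hs, hessR, dot3, Fin.sum_univ_three,
    Fin.reduceEq, reduceIte, if_true, if_false, mul_zero, zero_mul, mul_one, sub_zero,
    zero_add, add_zero, neg_zero, zero_sub]
  ring

end AuxProof

/-- for a conformal immersion `X : (Σ, α|dz|²) → (ℝ³, ⟨·,·⟩_F)`, the
sectional curvature of the ambient conformally flat manifold along the tangent plane
`dX(TΣ)` (spanned by `X_u, X_v`, with `K̄(TΣ) = ⟨R̄(X_u,X_v)X_v,X_u⟩_F / α²`) is
`K̄(TΣ) = -‖∇F‖² + (4/(α F(X))) Hess F(X_z, X_z̄)`,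
where `Hess F(X_z,X_z̄) = (1/4)[Hess F(X_u,X_u) + Hess F(X_v,X_v)]` and `∇F`, `Hess F`
are the Euclidean gradient and Hessian of `F` evaluated at `X(z)`. -/
theorem ambient_sectional_curvature_tangent_plane
    (F : (Fin 3 → ℝ) → ℝ) (hF : ContDiff ℝ (⊤ : ℕ∞) F) (hFpos : ∀ x, 0 < F x)
    (X : ℂ → Fin 3 → ℝ) (hX : ∀ k, ContDiff ℝ (⊤ : ℕ∞) (fun w => X w k))
    (α : ℂ → ℝ) (hα : ∀ z, 0 < α z)
    (hconf₁ : ∀ z, ((F (X z)) ^ 2)⁻¹ * dot3 (pD X 1 z) (pD X 1 z) = α z)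
    (hconf₂ : ∀ z, ((F (X z)) ^ 2)⁻¹ * dot3 (pD X I z) (pD X I z) = α z)
    (hconf₃ : ∀ z, ((F (X z)) ^ 2)⁻¹ * dot3 (pD X 1 z) (pD X I z) = 0)
    (z : ℂ) :
    riemQuad F (X z) (pD X 1 z) (pD X I z) (pD X I z) (pD X 1 z) / (α z) ^ 2
      = - (∑ i : Fin 3, (pd i F (X z)) ^ 2)
        + (4 / (α z * F (X z))) *
            ((1 / 4) * (hessR F (X z) (pD X 1 z) (pD X 1 z)
              + hessR F (X z) (pD X I z) (pD X I z))) := by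
  have hf : F (X z) ≠ 0 := (hFpos (X z)).ne'
  have ha : α z ≠ 0 := (hα z).ne'
  have hs : ∀ p q : Fin 3, pd p (fun y => pd q F y) (X z) = pd q (fun y => pd p F y) (X z) :=
    fun p q => pd_symm hF (X z) p q
  have dAA : dot3 (pD X 1 z) (pD X 1 z) = α z * F (X z)^2 := by
    have h := hconf₁ z; field_simp at h; linarith
  have dBB : dot3 (pD X I z) (pD X I z) = α z * F (X z)^2 := by
    have h := hconf₂ z; field_simp at h; linarith
  have dAB : dot3 (pD X 1 z) (pD X I z) = 0 := by
    have h := hconf₃ z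
    have h2 : ((F (X z)) ^ 2)⁻¹ ≠ 0 := by positivity
    exact ((mul_eq_zero.mp h).resolve_left h2)
  have dBA : dot3 (pD X I z) (pD X 1 z) = 0 := by
    have : dot3 (pD X I z) (pD X 1 z) = dot3 (pD X 1 z) (pD X I z) := by
      simp only [dot3]; apply Finset.sum_congr rfl; intro i _; ring
    rw [this, dAB]
  rw [riemQuad_formula hF hFpos (X z) hs, dAA, dBB, dAB, dBA]
  field_simp
  ring
end

section
/- Let m > 2q > 0 and s₀ = 2q²/(m - √(m² - 4q²)) be the larger root of 1 - m/r + q²/r² = 0. Define h : [0,∞) → [s₀,∞) as the inverse of F(r) = ∫_{s₀}^r (1 - m/ρ + q²/ρ²)^{-1/2} dρ. Then h'(t) = √(1 - m h(t)⁻¹ + q² h(t)⁻²), h(0) = s₀, h'(0) = 0, and the Reissner–Nordstrom warped metric dt² + h(t)²dω² satisfies K_tan(t) - K_rad(t) = (3m)/(2h(t)³) - 2q²/h(t)⁴. -/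
/-!
Near its simple root `s₀` the factor `P(ρ) = 1 - m/ρ + q²/ρ² = (ρ - s₀)(ρ - s₁)/ρ²`
(`s₀ s₁ = q²`) is comparable to `ρ - s₀`. Hence `P^{-1/2}` is integrable at `s₀`, `F > 0` on
`(s₀, ∞)`, and `F(r) ≥ 2√(s₀ (r - s₀))`; the latter says `h(t) - s₀ ≤ t²/(4 s₀)`, which forces
`h'(0) = 0`. For `t > 0` the inverse function theorem gives `h' = √(P ∘ h)`, hence
`h'' = P'(h)/2`, and the curvature identity is the algebra
`(1 - P(h))/h² + P'(h)/(2h) = 3m/(2h³) - 2q²/h⁴`.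
-/

open Set MeasureTheory intervalIntegral Filter Topology Asymptotics

lemma intervalIntegrable_sub_rpow_neg_half (a b : ℝ) :
    IntervalIntegrable (fun ρ => (ρ - a) ^ (-(1 / 2) : ℝ)) volume a b := by
  simpa using (intervalIntegrable_rpow' (a := 0) (b := b - a) (r := -(1 / 2))
    (by norm_num)).comp_sub_right a

lemma integral_sub_rpow_neg_half (a b : ℝ) :
    ∫ ρ in a..b, (ρ - a) ^ (-(1 / 2) : ℝ) = 2 * √(b - a) := by
  rw [integral_comp_sub_right (fun x => x ^ (-(1 / 2) : ℝ)), sub_self,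
    integral_rpow (Or.inl (by norm_num)), Real.zero_rpow (by norm_num), Real.sqrt_eq_rpow]
  norm_num
  ring

lemma sub_rpow_neg_half_eq_inv_sqrt {a ρ : ℝ} (h : a ≤ ρ) :
    (ρ - a) ^ (-(1 / 2) : ℝ) = (√(ρ - a))⁻¹ := by
  rw [Real.rpow_neg (sub_nonneg.2 h), Real.sqrt_eq_rpow]

lemma hasDerivWithinAt_zero_of_abs_sub_le_sq {g : ℝ → ℝ} {s : Set ℝ} {C : ℝ}
    (hg : ∀ t ∈ s, |g t - g 0| ≤ C * t ^ 2) : HasDerivWithinAt g 0 s 0 := by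
  rw [hasDerivWithinAt_iff_isLittleO]
  simp only [sub_zero, smul_zero]
  refine IsBigO.trans_isLittleO (g := fun t => t ^ 2) ?_
    ((isLittleO_pow_id one_lt_two).mono nhdsWithin_le_nhds)
  exact IsBigO.of_bound C (eventually_nhdsWithin_of_forall fun t ht => by
    simpa [abs_of_nonneg (sq_nonneg t)] using hg t ht)

section IntegralOfOneDivSqrt

variable {P : ℝ → ℝ} {a r c : ℝ}

lemma intervalIntegrable_one_div_sqrt (hPc : ContinuousOn P (Ioi a)) (hc : 0 < c)
    (hlow : ∀ ρ ∈ Ioc a r, c * (ρ - a) ≤ P ρ) (har : a ≤ r) :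
    IntervalIntegrable (fun ρ => 1 / √(P ρ)) volume a r := by
  have hpos : ∀ ρ ∈ Ioc a r, 0 < P ρ := fun ρ hρ =>
    (mul_pos hc (sub_pos.2 hρ.1)).trans_le (hlow ρ hρ)
  rw [intervalIntegrable_iff_integrableOn_Ioc_of_le har]
  refine Integrable.mono' ((intervalIntegrable_sub_rpow_neg_half a r).1.const_mul (√c)⁻¹)
    ((continuousOn_const.div (hPc.mono Ioc_subset_Ioi_self).sqrt fun ρ hρ =>
      (Real.sqrt_pos.2 (hpos ρ hρ)).ne').aestronglyMeasurable measurableSet_Ioc)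
    ((ae_restrict_iff' measurableSet_Ioc).2 (Eventually.of_forall fun ρ hρ => ?_))
  rw [Real.norm_of_nonneg (by positivity), sub_rpow_neg_half_eq_inv_sqrt hρ.1.le, ← mul_inv,
    ← Real.sqrt_mul hc.le, one_div]
  exact inv_anti₀ (Real.sqrt_pos.2 (mul_pos hc (sub_pos.2 hρ.1)))
    (Real.sqrt_le_sqrt (hlow ρ hρ))

lemma two_mul_sqrt_mul_sqrt_le_integral_one_div_sqrt (hc : 0 < c) (har : a ≤ r)
    (hint : IntervalIntegrable (fun ρ => 1 / √(P ρ)) volume a r)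
    (hup : ∀ ρ ∈ Ioo a r, 0 < P ρ ∧ c * P ρ ≤ ρ - a) :
    2 * √c * √(r - a) ≤ ∫ ρ in a..r, 1 / √(P ρ) := by
  calc 2 * √c * √(r - a) = ∫ ρ in a..r, √c * (ρ - a) ^ (-(1 / 2) : ℝ) := by
        rw [intervalIntegral.integral_const_mul, integral_sub_rpow_neg_half]; ring
    _ ≤ ∫ ρ in a..r, 1 / √(P ρ) := by
      refine integral_mono_on_of_le_Ioo har
        ((intervalIntegrable_sub_rpow_neg_half a r).const_mul _) hint fun ρ hρ => ?_
      obtain ⟨hPpos, hcP⟩ := hup ρ hρ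
      rw [sub_rpow_neg_half_eq_inv_sqrt hρ.1.le, ← div_eq_mul_inv,
        div_le_div_iff₀ (Real.sqrt_pos.2 (sub_pos.2 hρ.1)) (Real.sqrt_pos.2 hPpos), one_mul,
        ← Real.sqrt_mul hc.le]
      exact Real.sqrt_le_sqrt hcP

end IntegralOfOneDivSqrt

section InverseOfIntegral

variable {F h : ℝ → ℝ} {a : ℝ}

lemma apply_zero_eq_and_lt_apply (hFa : F a = 0) (hFpos : ∀ r, a < r → 0 < F r)
    (hdom : ∀ t ∈ Ici (0 : ℝ), a ≤ h t ∧ F (h t) = t) :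
    h 0 = a ∧ ∀ t, 0 < t → a < h t := by
  refine ⟨?_, fun t ht => ?_⟩
  · obtain ⟨hle, hF0⟩ := hdom 0 self_mem_Ici
    exact ((eq_or_lt_of_le hle).resolve_right fun hlt => (hFpos _ hlt).ne' hF0).symm
  · obtain ⟨hle, hFt⟩ := hdom t ht.le
    refine hle.lt_of_ne fun heq => ht.ne ?_
    rwa [← heq, hFa] at hFt

lemma hasDerivAt_of_integral_inverse {f : ℝ → ℝ} (hf : ContinuousOn f (Ioi a))
    (hF : ∀ r, F r = ∫ ρ in a..r, f ρ) (hdom : ∀ t ∈ Ici (0 : ℝ), a ≤ h t ∧ F (h t) = t)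
    (hcont : ContinuousOn h (Ici 0)) {t : ℝ} (ht : 0 < t) (hht : a < h t)
    (hint : IntervalIntegrable f volume a (h t)) (hft : f (h t) ≠ 0) :
    HasDerivAt h (f (h t))⁻¹ t := by
  have hFderiv : HasDerivAt F (f (h t)) (h t) :=
    (integral_hasDerivAt_right hint (hf.stronglyMeasurableAtFilter isOpen_Ioi _ hht)
      (hf.continuousAt (Ioi_mem_nhds hht))).congr_of_eventuallyEq (Eventually.of_forall hF)
  exact hFderiv.of_local_left_inverse (hcont.continuousAt (Ici_mem_nhds ht)) hft
    (eventually_of_mem (Ici_mem_nhds ht) fun y hy => (hdom y hy).2)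

end InverseOfIntegral

theorem hasDerivAt_inverse_integral_one_div_sqrt {P F h : ℝ → ℝ} {a : ℝ}
    (hPc : ContinuousOn P (Ioi a))
    (hlow : ∀ r, a < r → ∃ c > 0, ∀ ρ ∈ Ioc a r, c * (ρ - a) ≤ P ρ)
    (hup : ∃ c > 0, ∀ ρ, a < ρ → c * P ρ ≤ ρ - a)
    (hF : ∀ r, F r = ∫ ρ in a..r, 1 / √(P ρ))
    (hdom : ∀ t ∈ Ici (0 : ℝ), a ≤ h t ∧ F (h t) = t)
    (hcont : ContinuousOn h (Ici 0)) :
    h 0 = a ∧ HasDerivWithinAt h 0 (Ici 0) 0 ∧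
      ∀ t, 0 < t → a < h t ∧ HasDerivAt h (√(P (h t))) t := by
  have hpos : ∀ ρ, a < ρ → 0 < P ρ := fun ρ hρ => by
    obtain ⟨c, hc, hcP⟩ := hlow ρ hρ
    exact (mul_pos hc (sub_pos.2 hρ)).trans_le (hcP ρ ⟨hρ, le_rfl⟩)
  have hint : ∀ r, a < r → IntervalIntegrable (fun ρ => 1 / √(P ρ)) volume a r := fun r hr => by
    obtain ⟨c, hc, hcP⟩ := hlow r hr
    exact intervalIntegrable_one_div_sqrt hPc hc hcP hr.le
  have hFpos : ∀ r, a < r → 0 < F r := fun r hr => by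
    rw [hF]
    exact intervalIntegral_pos_of_pos_on (hint r hr)
      (fun ρ hρ => one_div_pos.2 (Real.sqrt_pos.2 (hpos ρ hρ.1))) hr
  obtain ⟨h0, hlt⟩ := apply_zero_eq_and_lt_apply (by simp [hF]) hFpos hdom
  obtain ⟨c, hc, hcP⟩ := hup
  refine ⟨h0, hasDerivWithinAt_zero_of_abs_sub_le_sq (C := (4 * c)⁻¹) fun t ht => ?_,
    fun t ht => ⟨hlt t ht, ?_⟩⟩
  · rcases (mem_Ici.1 ht).eq_or_lt with rfl | ht0
    · simp
    have hbound := two_mul_sqrt_mul_sqrt_le_integral_one_div_sqrt hc (hlt t ht0).le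
      (hint _ (hlt t ht0)) fun ρ hρ => ⟨hpos ρ hρ.1, hcP ρ hρ.1⟩
    rw [← hF, (hdom t ht).2] at hbound
    have hsq := pow_le_pow_left₀ (by positivity) hbound 2
    rw [mul_pow, mul_pow, Real.sq_sqrt hc.le, Real.sq_sqrt (sub_nonneg.2 (hlt t ht0).le)] at hsq
    rw [h0, abs_of_nonneg (sub_nonneg.2 (hlt t ht0).le), inv_mul_eq_div,
      le_div_iff₀ (by positivity)]
    linarith
  · have hf : ContinuousOn (fun ρ => 1 / √(P ρ)) (Ioi a) :=
      continuousOn_const.div hPc.sqrt fun ρ hρ => (Real.sqrt_pos.2 (hpos ρ hρ)).ne'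
    simpa using hasDerivAt_of_integral_inverse hf hF hdom hcont ht (hlt t ht)
      (hint _ (hlt t ht)) (one_div_pos.2 (Real.sqrt_pos.2 (hpos _ (hlt t ht)))).ne'

lemma deriv_deriv_eq_of_hasDerivAt_sqrt {P h : ℝ → ℝ} {t P' : ℝ}
    (hder : ∀ᶠ y in 𝓝 t, HasDerivAt h (√(P (h y))) y) (hP : HasDerivAt P P' (h t))
    (hpos : 0 < P (h t)) :
    deriv (deriv h) t = P' / 2 := by
  have hd : HasDerivAt (fun y => √(P (h y))) (P' * √(P (h t)) / (2 * √(P (h t)))) t :=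
    (hP.comp t hder.self_of_nhds).sqrt hpos.ne'
  have hderiv : deriv h =ᶠ[𝓝 t] fun y => √(P (h y)) := hder.mono fun y hy => hy.deriv
  rw [hderiv.deriv_eq, hd.deriv]
  field_simp

section ReissnerNordstrom

variable {m q s₀ s₁ ρ : ℝ}

noncomputable def reissnerNordstromFactor (m q ρ : ℝ) : ℝ := 1 - m / ρ + q ^ 2 / ρ ^ 2

lemma exists_inner_root (hq : 0 < q) (hmq : 2 * q < m)
    (hs₀ : s₀ = 2 * q ^ 2 / (m - √(m ^ 2 - 4 * q ^ 2))) :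
    ∃ s₁, 0 < s₁ ∧ s₁ < s₀ ∧ s₀ + s₁ = m ∧ s₀ * s₁ = q ^ 2 := by
  have hD : 0 < m ^ 2 - 4 * q ^ 2 := by nlinarith
  set d := √(m ^ 2 - 4 * q ^ 2)
  have hd : 0 < d := Real.sqrt_pos.2 hD
  have hd2 : d ^ 2 = m ^ 2 - 4 * q ^ 2 := Real.sq_sqrt hD.le
  have hdm : d < m := by nlinarith
  -- rationalizing the denominator: `s₀ = (m + d) / 2`
  have hs₀' : s₀ = (m + d) / 2 := by
    rw [hs₀, div_eq_div_iff (by linarith) two_ne_zero]; nlinarith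
  exact ⟨(m - d) / 2, by linarith, by linarith, by linarith, by rw [hs₀']; nlinarith⟩

lemma reissnerNordstromFactor_eq (hsum : s₀ + s₁ = m) (hprod : s₀ * s₁ = q ^ 2) (hρ : ρ ≠ 0) :
    reissnerNordstromFactor m q ρ = (ρ - s₀) * (ρ - s₁) / ρ ^ 2 := by
  rw [reissnerNordstromFactor, ← hsum, ← hprod]
  field_simp
  ring

lemma hasDerivAt_reissnerNordstromFactor (hρ : ρ ≠ 0) :
    HasDerivAt (reissnerNordstromFactor m q) (m / ρ ^ 2 - 2 * q ^ 2 / ρ ^ 3) ρ := by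
  have hsum : HasDerivAt (fun x => 1 - m / x + q ^ 2 / x ^ 2)
      (0 - (0 * ρ - m * 1) / ρ ^ 2 + (0 * ρ ^ 2 - q ^ 2 * (2 * ρ)) / (ρ ^ 2) ^ 2) ρ :=
    ((hasDerivAt_const ρ 1).sub ((hasDerivAt_const ρ m).div (hasDerivAt_id' ρ) hρ)).add
      ((hasDerivAt_const ρ (q ^ 2)).div (by simpa using hasDerivAt_pow 2 ρ) (pow_ne_zero 2 hρ))
  refine hsum.congr_deriv ?_
  field_simp
  ring

lemma reissnerNordstromFactor_pos (hs₁ : 0 < s₁) (hs : s₁ < s₀) (hsum : s₀ + s₁ = m)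
    (hprod : s₀ * s₁ = q ^ 2) (hρ : s₀ < ρ) : 0 < reissnerNordstromFactor m q ρ := by
  rw [reissnerNordstromFactor_eq hsum hprod (by linarith)]
  exact div_pos (mul_pos (by linarith) (by linarith)) (pow_pos (by linarith) 2)

lemma mul_sub_le_reissnerNordstromFactor {r : ℝ} (hs₁ : 0 < s₁) (hs : s₁ < s₀)
    (hsum : s₀ + s₁ = m) (hprod : s₀ * s₁ = q ^ 2) (hρ : ρ ∈ Ioc s₀ r) :
    (s₀ - s₁) / r ^ 2 * (ρ - s₀) ≤ reissnerNordstromFactor m q ρ := by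
  obtain ⟨hs₀ρ, hρr⟩ := hρ
  rw [reissnerNordstromFactor_eq hsum hprod (by linarith),
    show (ρ - s₀) * (ρ - s₁) / ρ ^ 2 = (ρ - s₁) / ρ ^ 2 * (ρ - s₀) by ring]
  have : 0 < ρ := by linarith
  gcongr
  linarith

lemma mul_reissnerNordstromFactor_le (hs₁ : 0 < s₁) (hs : s₁ < s₀) (hsum : s₀ + s₁ = m)
    (hprod : s₀ * s₁ = q ^ 2) (hρ : s₀ < ρ) :
    s₀ * reissnerNordstromFactor m q ρ ≤ ρ - s₀ := by
  have hρ0 : 0 < ρ := by linarith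
  rw [reissnerNordstromFactor_eq hsum hprod hρ0.ne', mul_div_assoc', div_le_iff₀ (by positivity)]
  have : s₀ * (ρ - s₁) ≤ ρ * ρ := by nlinarith
  nlinarith

end ReissnerNordstrom

theorem reissnerNordstrom_warping_general
    (m q s₀ : ℝ) (hq : 0 < q) (hmq : 2 * q < m)
    (hs₀ : s₀ = 2 * q ^ 2 / (m - Real.sqrt (m ^ 2 - 4 * q ^ 2)))
    (F h : ℝ → ℝ)
    (hF : ∀ r, F r = ∫ ρ in s₀..r, 1 / Real.sqrt (1 - m / ρ + q ^ 2 / ρ ^ 2))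
    (hdom : ∀ t ∈ Set.Ici (0 : ℝ), s₀ ≤ h t ∧ F (h t) = t)
    (hcont : ContinuousOn h (Set.Ici (0 : ℝ))) :
    h 0 = s₀ ∧
    derivWithin h (Set.Ici 0) 0 = 0 ∧
    (∀ t ∈ Set.Ioi (0 : ℝ),
      deriv h t = Real.sqrt (1 - m / h t + q ^ 2 / (h t) ^ 2)) ∧
    (∀ t ∈ Set.Ioi (0 : ℝ),
      (1 - (deriv h t) ^ 2) / (h t) ^ 2 - (- (deriv (deriv h) t) / h t)
        = 3 * m / (2 * (h t) ^ 3) - 2 * q ^ 2 / (h t) ^ 4) := by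
  obtain ⟨s₁, hs₁, hs₁₀, hsum, hprod⟩ := exists_inner_root hq hmq hs₀
  have hs₀pos : 0 < s₀ := hs₁.trans hs₁₀
  obtain ⟨h0, hderiv0, hderiv⟩ := hasDerivAt_inverse_integral_one_div_sqrt
    (P := reissnerNordstromFactor m q)
    (fun ρ hρ => (hasDerivAt_reissnerNordstromFactor
      (hs₀pos.trans hρ).ne').continuousAt.continuousWithinAt)
    (fun r hr => ⟨(s₀ - s₁) / r ^ 2, div_pos (sub_pos.2 hs₁₀) (pow_pos (hs₀pos.trans hr) 2),
      fun ρ hρ => mul_sub_le_reissnerNordstromFactor hs₁ hs₁₀ hsum hprod hρ⟩)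
    ⟨s₀, hs₀pos, fun ρ hρ => mul_reissnerNordstromFactor_le hs₁ hs₁₀ hsum hprod hρ⟩
    hF hdom hcont
  refine ⟨h0, hderiv0.derivWithin (uniqueDiffOn_Ici 0 0 self_mem_Ici),
    fun t ht => (hderiv t ht).2.deriv, fun t ht => ?_⟩
  obtain ⟨hlt, hdt⟩ := hderiv t ht
  have hP := reissnerNordstromFactor_pos hs₁ hs₁₀ hsum hprod hlt
  have hht : h t ≠ 0 := (hs₀pos.trans hlt).ne'
  rw [hdt.deriv, deriv_deriv_eq_of_hasDerivAt_sqrt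
    (eventually_of_mem (Ioi_mem_nhds ht) fun y hy => (hderiv y hy).2)
    (hasDerivAt_reissnerNordstromFactor hht) hP, Real.sq_sqrt hP.le, reissnerNordstromFactor]
  field_simp
  ring

/-- Reissner–Nordstrom: let `m > 2q > 0` and
`s₀ = 2q²/(m - √(m² - 4q²))` the larger root of `1 - m/r + q²/r² = 0`.  Define
`h : [0,∞) → [s₀,∞)` as the inverse of `F(r) = ∫_{s₀}^r (1 - m/ρ + q²/ρ²)^{-1/2} dρ`.
Then `h'(t) = √(1 - m h(t)⁻¹ + q² h(t)⁻²)`, `h(0) = s₀`, `h'(0) = 0`, and the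
Reissner–Nordstrom warped metric `dt² + h(t)²dω²` satisfies
`K_tan(t) - K_rad(t) = (3m)/(2h(t)³) - 2q²/h(t)⁴`,
where `K_tan(t) = (1 - h'(t)²)/h(t)²` and `K_rad(t) = -h''(t)/h(t)`. -/
theorem reissnerNordstrom_warping
    (m q s₀ : ℝ) (hq : 0 < q) (hmq : 2 * q < m)
    (hs₀ : s₀ = 2 * q ^ 2 / (m - Real.sqrt (m ^ 2 - 4 * q ^ 2)))
    (F h : ℝ → ℝ)
    (hF : ∀ r, F r = ∫ ρ in s₀..r, 1 / Real.sqrt (1 - m / ρ + q ^ 2 / ρ ^ 2))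
    (hinv : ∀ r ∈ Set.Ioi s₀, h (F r) = r)
    (hdom : ∀ t ∈ Set.Ici (0 : ℝ), s₀ ≤ h t ∧ F (h t) = t)
    (hcont : ContinuousOn h (Set.Ici (0 : ℝ))) :
    h 0 = s₀ ∧
    derivWithin h (Set.Ici 0) 0 = 0 ∧
    (∀ t ∈ Set.Ioi (0 : ℝ),
      deriv h t = Real.sqrt (1 - m / h t + q ^ 2 / (h t) ^ 2)) ∧
    (∀ t ∈ Set.Ioi (0 : ℝ),
      (1 - (deriv h t) ^ 2) / (h t) ^ 2 - (- (deriv (deriv h) t) / h t)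
        = 3 * m / (2 * (h t) ^ 3) - 2 * q ^ 2 / (h t) ^ 4) :=
  reissnerNordstrom_warping_general m q s₀ hq hmq hs₀ F h hF hdom hcont
end
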